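/- The canonical pre-Lie algebra homomorphism p : pL(V) → T̄(V) (induced by V ↪ T̄(V), where T̄(V) carries the pre-Lie structure of its associative product) restricts to an isomorphism from the Lie subalgebra of pL(V)_L generated by V onto the Lie subalgebra of T̄(V)_L generated by V. -/

import Mathlib

/-!
Let `ρ(y)` be minus right multiplication by `y` on `P × k`, where the adjoined `1` acts as a left
unit: `ρ(y)(x, c) = -(x y + c y, 0)`. The pre-Lie identity says exactly that `ρ` turns commutators
of `P` into commutators of endomorphisms, and `ρ` is injective since `ρ(y)(0, 1) = (-y, 0)`.
Extending `ρ ∘ ι` to an algebra map `Φ` on the tensor algebra, `Φ ∘ p` and `ρ` are two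
commutator-preserving maps that agree on `V`, hence on the Lie closure of `V`; so `p` is injective
there. The image statement holds for any commutator-preserving map.
-/

/-- The universal property of the free pre-Lie algebra on a vector space `V`:
`P` with pre-Lie product `mul` and structure map `ι` is free if every linear map
from `V` to a pre-Lie algebra extends uniquely to a product-preserving linear map. -/
structure IsFreePreLie (k : Type) [Field k] (V : Type) [AddCommGroup V] [Module k V]
    (P : Type) [AddCommGroup P] [Module k P]
    (mul : P →ₗ[k] P →ₗ[k] P) (ι : V →ₗ[k] P) : Prop where
  preLie : ∀ x y z : P,
    mul (mul x y) z - mul x (mul y z) = mul (mul x z) y - mul x (mul z y)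
  lift : ∀ (Q : Type) [AddCommGroup Q] [Module k Q] (m : Q →ₗ[k] Q →ₗ[k] Q),
    (∀ x y z : Q, m (m x y) z - m x (m y z) = m (m x z) y - m x (m z y)) →
    ∀ f : V →ₗ[k] Q, ∃! g : P →ₗ[k] Q,
      (∀ v, g (ι v) = f v) ∧ ∀ x y, g (mul x y) = m (g x) (g y)

/-- The Lie subalgebra (as a subspace) generated by the image of `ι`, for the
commutator bracket of `mul`. -/
def lieClosure {k : Type} [Field k] {V : Type} [AddCommGroup V] [Module k V]
    {P : Type} [AddCommGroup P] [Module k P]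
    (mul : P →ₗ[k] P →ₗ[k] P) (ι : V →ₗ[k] P) : Submodule k P :=
  sInf {W : Submodule k P |
    (∀ v : V, ι v ∈ W) ∧ ∀ x ∈ W, ∀ y ∈ W, mul x y - mul y x ∈ W}

attribute [local instance] LieRing.ofAssociativeRing

section LieClosure

variable {k V P : Type} [Field k] [AddCommGroup V] [Module k V] [AddCommGroup P] [Module k P]
  {mul : P →ₗ[k] P →ₗ[k] P} {ι : V →ₗ[k] P}

theorem lieClosure_le {W : Submodule k P} (hι : ∀ v, ι v ∈ W)
    (hW : ∀ x ∈ W, ∀ y ∈ W, mul x y - mul y x ∈ W) : lieClosure mul ι ≤ W :=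
  sInf_le ⟨hι, hW⟩

theorem apply_mem_lieClosure (v : V) : ι v ∈ lieClosure mul ι :=
  Submodule.mem_sInf.2 fun _ hW => hW.1 v

theorem commutator_mem_lieClosure {x y : P} (hx : x ∈ lieClosure mul ι) (hy : y ∈ lieClosure mul ι) :
    mul x y - mul y x ∈ lieClosure mul ι :=
  Submodule.mem_sInf.2 fun W hW =>
    hW.2 x (Submodule.mem_sInf.1 hx W hW) y (Submodule.mem_sInf.1 hy W hW)

variable {A : Type} [Ring A] [Algebra k A]

theorem eqOn_lieClosure {f g : P →ₗ[k] A}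
    (hf : ∀ x y, f (mul x y - mul y x) = ⁅f x, f y⁆)
    (hg : ∀ x y, g (mul x y - mul y x) = ⁅g x, g y⁆)
    (hfg : ∀ v, f (ι v) = g (ι v)) :
    Set.EqOn f g (lieClosure mul ι) := by
  have hker : lieClosure mul ι ≤ LinearMap.ker (f - g) := by
    refine lieClosure_le (by simpa [sub_eq_zero] using hfg) fun x hx y hy => ?_
    simp only [LinearMap.mem_ker, LinearMap.sub_apply, sub_eq_zero] at hx hy ⊢
    rw [hf, hg, hx, hy]
  intro x hx
  simpa [sub_eq_zero] using hker hx

theorem map_lieClosure {p : P →ₗ[k] A}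
    (hp : ∀ x y, p (mul x y - mul y x) = ⁅p x, p y⁆) :
    (lieClosure mul ι).map p = (LieSubalgebra.lieSpan k A (Set.range (p ∘ₗ ι))).toSubmodule := by
  apply le_antisymm
  · rw [Submodule.map_le_iff_le_comap]
    refine lieClosure_le (fun v => LieSubalgebra.subset_lieSpan ⟨v, rfl⟩) fun x hx y hy => ?_
    rw [Submodule.mem_comap, hp]
    exact LieSubalgebra.lie_mem _ hx hy
  · let K : LieSubalgebra k A :=
      { (lieClosure mul ι).map p with
        lie_mem' := by
          rintro _ _ ⟨x, hx, rfl⟩ ⟨y, hy, rfl⟩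
          exact ⟨_, commutator_mem_lieClosure hx hy, hp x y⟩ }
    have hK : LieSubalgebra.lieSpan k A (Set.range (p ∘ₗ ι)) ≤ K := by
      rw [LieSubalgebra.lieSpan_le]
      rintro _ ⟨v, rfl⟩
      exact ⟨ι v, apply_mem_lieClosure v, rfl⟩
    exact hK

end LieClosure

section NegRightMul

variable {k P : Type} [Field k] [AddCommGroup P] [Module k P]

/-- The sign makes this a Lie homomorphism rather than an anti-homomorphism. -/
def negRightMulUnitization (mul : P →ₗ[k] P →ₗ[k] P) : P →ₗ[k] Module.End k (P × k) :=
  LinearMap.mk₂ k (fun y xc => (-(mul xc.1 y + xc.2 • y), 0))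
    (fun y y' xc => by simp [Prod.ext_iff, smul_add]; abel)
    (fun c y xc => by simp [smul_add, smul_smul, mul_comm])
    (fun y xc xc' => by simp [Prod.ext_iff, add_smul]; abel)
    (fun c y xc => by simp [smul_add, smul_smul])

theorem negRightMulUnitization_apply (mul : P →ₗ[k] P →ₗ[k] P) (y : P) (xc : P × k) :
    negRightMulUnitization mul y xc = (-(mul xc.1 y + xc.2 • y), 0) := rfl

theorem negRightMulUnitization_injective (mul : P →ₗ[k] P →ₗ[k] P) :
    Function.Injective (negRightMulUnitization mul) := by
  intro y y' h
  simpa [negRightMulUnitization_apply] using congr($h (0, 1))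

theorem negRightMulUnitization_commutator {mul : P →ₗ[k] P →ₗ[k] P}
    (hmul : ∀ x y z : P,
      mul (mul x y) z - mul x (mul y z) = mul (mul x z) y - mul x (mul z y))
    (x y : P) :
    negRightMulUnitization mul (mul x y - mul y x)
      = ⁅negRightMulUnitization mul x, negRightMulUnitization mul y⁆ := by
  refine LinearMap.ext fun ⟨a, c⟩ => Prod.ext ?_ (by simp [negRightMulUnitization_apply])
  simp only [Ring.lie_def, map_sub, LinearMap.sub_apply, Module.End.mul_apply, negRightMulUnitization_apply,
    Prod.fst_sub, map_neg, map_add, map_smul, LinearMap.neg_apply, LinearMap.add_apply,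
    LinearMap.smul_apply, zero_smul, add_zero]
  linear_combination (norm := abel1) hmul a x y

end NegRightMul

theorem injOn_lieClosure_of_preLie {k V P : Type} [Field k] [AddCommGroup V] [Module k V]
    [AddCommGroup P] [Module k P] {mul : P →ₗ[k] P →ₗ[k] P} {ι : V →ₗ[k] P}
    (hmul : ∀ x y z : P,
      mul (mul x y) z - mul x (mul y z) = mul (mul x z) y - mul x (mul z y))
    {p : P →ₗ[k] TensorAlgebra k V} (hpι : ∀ v, p (ι v) = TensorAlgebra.ι k v)
    (hpmul : ∀ x y, p (mul x y) = p x * p y) :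
    Set.InjOn p (lieClosure mul ι) := by
  let ρ := negRightMulUnitization mul
  let Φ := TensorAlgebra.lift k (ρ ∘ₗ ι)
  have hΦp : Set.EqOn ρ (Φ.toLinearMap ∘ₗ p) (lieClosure mul ι) :=
    eqOn_lieClosure (negRightMulUnitization_commutator hmul)
      (fun x y => by simp [hpmul, Ring.lie_def])
      (fun v => by simp [Φ, hpι])
  exact Set.InjOn.of_comp (g := Φ) ((negRightMulUnitization_injective mul).injOn.congr hΦp)

theorem canonical_map_restricts_to_lie_iso_general {k V P : Type} [Field k]
    [AddCommGroup V] [Module k V] [AddCommGroup P] [Module k P]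
    (mul : P →ₗ[k] P →ₗ[k] P) (ι : V →ₗ[k] P)
    (h : IsFreePreLie k V P mul ι)
    (p : P →ₗ[k] TensorAlgebra k V)
    (hpι : ∀ v : V, p (ι v) = TensorAlgebra.ι k v)
    (hpmul : ∀ x y : P, p (mul x y) = p x * p y) :
    Set.InjOn p (lieClosure mul ι : Set P) ∧
    p '' (lieClosure mul ι : Set P)
      = (LieSubalgebra.lieSpan k (TensorAlgebra k V)
          (Set.range (TensorAlgebra.ι k : V →ₗ[k] TensorAlgebra k V)) :
            Set (TensorAlgebra k V)) := by
  refine ⟨injOn_lieClosure_of_preLie h.preLie hpι hpmul, ?_⟩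
  rw [← Submodule.map_coe, map_lieClosure (fun x y => by simp [hpmul, Ring.lie_def]),
    show p ∘ₗ ι = TensorAlgebra.ι k from LinearMap.ext hpι]
  rfl

/-- The canonical pre-Lie homomorphism `p : pL(V) → T̄(V)` (induced by
`V ↪ T̄(V)`, with `T̄(V)` pre-Lie via its associative product) restricts to an
isomorphism from the Lie subalgebra of `pL(V)_L` generated by `V` onto the Lie
subalgebra of `T̄(V)_L` generated by `V`. -/
theorem canonical_map_restricts_to_lie_iso {k V P : Type} [Field k] [CharZero k]
    [AddCommGroup V] [Module k V] [AddCommGroup P] [Module k P]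
    (mul : P →ₗ[k] P →ₗ[k] P) (ι : V →ₗ[k] P)
    (h : IsFreePreLie k V P mul ι)
    (p : P →ₗ[k] TensorAlgebra k V)
    (hpι : ∀ v : V, p (ι v) = TensorAlgebra.ι k v)
    (hpmul : ∀ x y : P, p (mul x y) = p x * p y) :
    Set.InjOn p (lieClosure mul ι : Set P) ∧
    p '' (lieClosure mul ι : Set P)
      = (LieSubalgebra.lieSpan k (TensorAlgebra k V)
          (Set.range (TensorAlgebra.ι k : V →ₗ[k] TensorAlgebra k V)) :
            Set (TensorAlgebra k V)) :=
  canonical_map_restricts_to_lie_iso_general mul ι h p hpι hpmul
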